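/- Let Φ_0 be an arbitrary lift in A_k'(Γ, Z_p) of a p-adic automorphic U_p-eigenform φ with eigenvalue p^{k/2}, and set Φ_n = (Ũ_p)^n Φ_0 where Ũ_p = p^{−k/2} U_p. Then Φ_{n+1} − Φ_n takes values in F^n D_k(Z_p) for all n ≥ 0; i.e. for all g and all 1 ≤ i ≤ n, (Φ_{n+1} − Φ_n)(g)(x^{k+i}) ∈ p^{n−i+1} Z_p and (Φ_{n+1} − Φ_n)(g)(x^i) = 0 for 0 ≤ i ≤ k. -/

import Mathlib

/-- The matrices `α_j = [[p, j], [0, 1]]`. -/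
noncomputable def alphaMat17 (p : ℕ) [Fact p.Prime] (j : ℕ) :
    Matrix (Fin 2) (Fin 2) ℚ_[p] :=
  !![(p : ℚ_[p]), (j : ℚ_[p]); 0, 1]

/-- The operator `Ũ_p = p^{-k/2} U_p` on distribution-valued automorphic forms, written
out on moment functions: `(Ũ_p Φ)(g)(x^i) = p^{-k/2} ∑_{j<p} ∑_{ν≤i} C(i,ν) p^ν j^{i-ν}
Φ(gα_j)(x^ν)`. -/
noncomputable def Utilde (p k : ℕ) [Fact p.Prime]
    (Φ : Matrix (Fin 2) (Fin 2) ℚ_[p] → ℕ → ℚ_[p]) :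
    Matrix (Fin 2) (Fin 2) ℚ_[p] → ℕ → ℚ_[p] :=
  fun g i => ((p : ℚ_[p]) ^ (k / 2))⁻¹ *
    ∑ j ∈ Finset.range p, ∑ ν ∈ Finset.range (i + 1),
      (i.choose ν : ℚ_[p]) * (p : ℚ_[p]) ^ ν * (j : ℚ_[p]) ^ (i - ν)
        * Φ (g * alphaMat17 p j) ν

/-! `Ũ_p` is additive, so `Φ_{n+1} - Φ_n = Ũ_p^n (Ũ_p Φ₀ - Φ₀)`, and it suffices to show that
`Ũ_p` maps `F^n` into `F^{n+1}` and that `Ũ_p Φ₀ - Φ₀ ∈ F^0`. Both are norm estimates on the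
defining double sum: the term of index `ν` carries a factor `p^ν`, which pays for the factor
`p^{k/2}` lost to the normalisation `p^{-k/2}` once the moments of index `ν ≤ k/2` are small
(the `V_k'` condition) or, for `F^n`, because only the indices `ν ≥ k + 1` contribute. -/

noncomputable def UtildeAddHom (p k : ℕ) [Fact p.Prime] :
    (Matrix (Fin 2) (Fin 2) ℚ_[p] → ℕ → ℚ_[p]) →+ (Matrix (Fin 2) (Fin 2) ℚ_[p] → ℕ → ℚ_[p]) where
  toFun := Utilde p k
  map_zero' := by
    ext g i
    simp [Utilde]
  map_add' Φ Ψ := by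
    ext g i
    simp only [Utilde, Pi.add_apply, mul_add, Finset.sum_add_distrib]

/-- `F^n D_k` on moment functions (for `i > n` the bound is weaker than integrality). -/
def MemFiltration (p k n : ℕ) [Fact p.Prime]
    (Φ : Matrix (Fin 2) (Fin 2) ℚ_[p] → ℕ → ℚ_[p]) : Prop :=
  (∀ g, ∀ i ≤ k, Φ g i = 0) ∧
    ∀ g i, 1 ≤ i → ‖Φ g (k + i)‖ ≤ (p : ℝ) ^ (-((n : ℤ) - i + 1))

section

variable {p k : ℕ} [Fact p.Prime]

lemma iterate_Utilde_sub (n : ℕ) (Φ Ψ : Matrix (Fin 2) (Fin 2) ℚ_[p] → ℕ → ℚ_[p]) :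
    (Utilde p k)^[n] (Φ - Ψ) = (Utilde p k)^[n] Φ - (Utilde p k)^[n] Ψ :=
  iterate_map_sub (UtildeAddHom p k) n Φ Ψ

lemma Utilde_apply_eq_zero {Φ : Matrix (Fin 2) (Fin 2) ℚ_[p] → ℕ → ℚ_[p]} {i : ℕ}
    (hΦ : ∀ g, ∀ ν ≤ i, Φ g ν = 0) (g : Matrix (Fin 2) (Fin 2) ℚ_[p]) :
    Utilde p k Φ g i = 0 := by
  refine mul_eq_zero_of_right _ (Finset.sum_eq_zero fun j _ => Finset.sum_eq_zero fun ν hν => ?_)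
  rw [hΦ _ ν (Nat.lt_succ_iff.mp (Finset.mem_range.mp hν)), mul_zero]

lemma norm_Utilde_apply_le {Φ : Matrix (Fin 2) (Fin 2) ℚ_[p] → ℕ → ℚ_[p]} {i : ℕ}
    (b : ℕ → ℤ) (E : ℤ) (hΦ : ∀ g, ∀ ν ≤ i, ‖Φ g ν‖ ≤ (p : ℝ) ^ (-b ν))
    (hb : ∀ ν ≤ i, E + (k / 2 : ℕ) ≤ ν + b ν) (g : Matrix (Fin 2) (Fin 2) ℚ_[p]) :
    ‖Utilde p k Φ g i‖ ≤ (p : ℝ) ^ (-E) := by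
  have hp : (1 : ℝ) < p := by exact_mod_cast (Fact.out : p.Prime).one_lt
  have hterm : ∀ j : ℕ, ∀ ν ≤ i, ‖(i.choose ν : ℚ_[p]) * (p : ℚ_[p]) ^ ν * (j : ℚ_[p]) ^ (i - ν)
      * Φ (g * alphaMat17 p j) ν‖ ≤ (p : ℝ) ^ (-(E + (k / 2 : ℕ))) := by
    intro j ν hν
    calc _ = ‖(i.choose ν : ℚ_[p])‖ * (p : ℝ) ^ (-(ν : ℤ)) * ‖(j : ℚ_[p])‖ ^ (i - ν)
            * ‖Φ (g * alphaMat17 p j) ν‖ := by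
          rw [norm_mul, norm_mul, norm_mul, Padic.norm_p_pow, norm_pow]
      _ ≤ 1 * (p : ℝ) ^ (-(ν : ℤ)) * 1 ^ (i - ν) * (p : ℝ) ^ (-b ν) := by
          gcongr
          exacts [IsUltrametricDist.norm_natCast_le_one _ _,
            IsUltrametricDist.norm_natCast_le_one _ _, hΦ _ ν hν]
      _ = (p : ℝ) ^ (-(ν + b ν)) := by
          rw [one_pow, one_mul, mul_one, ← zpow_add₀ (by positivity), neg_add]
      _ ≤ (p : ℝ) ^ (-(E + (k / 2 : ℕ))) :=
          zpow_le_zpow_right₀ hp.le (neg_le_neg (hb ν hν))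
  have hsum := IsUltrametricDist.norm_sum_le_of_forall_le_of_nonneg (s := Finset.range p)
    (by positivity) fun j _ =>
    IsUltrametricDist.norm_sum_le_of_forall_le_of_nonneg (by positivity) fun ν hν =>
      hterm j ν (Nat.lt_succ_iff.mp (Finset.mem_range.mp hν))
  calc ‖Utilde p k Φ g i‖
      ≤ (p : ℝ) ^ ((k / 2 : ℕ) : ℤ) * (p : ℝ) ^ (-(E + (k / 2 : ℕ))) := by
        rw [Utilde, norm_mul, norm_inv, Padic.norm_p_pow, ← zpow_neg, neg_neg]
        gcongr
    _ = (p : ℝ) ^ (-E) := by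
        rw [← zpow_add₀ (by positivity)]
        ring_nf

lemma norm_Utilde_apply_le_one {Φ : Matrix (Fin 2) (Fin 2) ℚ_[p] → ℕ → ℚ_[p]}
    (hint : ∀ g i, ‖Φ g i‖ ≤ 1)
    (hV' : ∀ g, ∀ i ≤ k / 2, ‖Φ g i‖ ≤ (p : ℝ) ^ (-((k / 2 - i : ℕ) : ℤ)))
    (g : Matrix (Fin 2) (Fin 2) ℚ_[p]) (i : ℕ) :
    ‖Utilde p k Φ g i‖ ≤ 1 := by
  have hΦ : ∀ g' ν, ‖Φ g' ν‖ ≤ (p : ℝ) ^ (-((k / 2 - ν : ℕ) : ℤ)) := by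
    intro g' ν
    rcases le_or_gt ν (k / 2) with hν | hν
    · exact hV' g' ν hν
    · simpa [Nat.sub_eq_zero_of_le hν.le] using hint g' ν
  simpa using norm_Utilde_apply_le (k := k) (i := i) (fun ν => ((k / 2 - ν : ℕ) : ℤ)) 0
    (fun g' ν _ => hΦ g' ν) (fun ν _ => by omega) g

lemma MemFiltration.map_Utilde {n : ℕ} {Φ : Matrix (Fin 2) (Fin 2) ℚ_[p] → ℕ → ℚ_[p]}
    (hΦ : MemFiltration p k n Φ) : MemFiltration p k (n + 1) (Utilde p k Φ) := by
  refine ⟨fun g i hi => Utilde_apply_eq_zero (fun g' ν hν => hΦ.1 g' ν (hν.trans hi)) g,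
    fun g i hi => ?_⟩
  refine norm_Utilde_apply_le (fun ν => n + 1 + k - ν) _ (fun g' ν _ => ?_) (fun ν _ => ?_) g
  · rcases le_or_gt ν k with hν | hν
    · rw [hΦ.1 g' ν hν, norm_zero]
      positivity
    · obtain ⟨m, hm, rfl⟩ : ∃ m, 1 ≤ m ∧ ν = k + m := ⟨ν - k, by omega, by omega⟩
      convert hΦ.2 g' m hm using 2
      omega
  · push_cast
    omega

lemma MemFiltration.iterate_Utilde {n : ℕ} {Φ : Matrix (Fin 2) (Fin 2) ℚ_[p] → ℕ → ℚ_[p]}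
    (hΦ : MemFiltration p k 0 Φ) : MemFiltration p k n ((Utilde p k)^[n] Φ) := by
  induction n with
  | zero => exact hΦ
  | succ n ih => exact Function.iterate_succ_apply' (Utilde p k) n Φ ▸ ih.map_Utilde

lemma memFiltration_zero_Utilde_sub {Φ : Matrix (Fin 2) (Fin 2) ℚ_[p] → ℕ → ℚ_[p]}
    (hint : ∀ g i, ‖Φ g i‖ ≤ 1)
    (hV' : ∀ g, ∀ i ≤ k / 2, ‖Φ g i‖ ≤ (p : ℝ) ^ (-((k / 2 - i : ℕ) : ℤ)))
    (heig : ∀ g, ∀ i ≤ k, Utilde p k Φ g i = Φ g i) :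
    MemFiltration p k 0 (Utilde p k Φ - Φ) := by
  refine ⟨fun g i hi => sub_eq_zero.mpr (heig g i hi), fun g i hi => ?_⟩
  have hp : (1 : ℝ) ≤ p := by exact_mod_cast (Fact.out : p.Prime).one_lt.le
  calc ‖Utilde p k Φ g (k + i) - Φ g (k + i)‖
      ≤ max ‖Utilde p k Φ g (k + i)‖ ‖Φ g (k + i)‖ := by
        simpa [sub_eq_add_neg] using
          IsUltrametricDist.norm_add_le_max (Utilde p k Φ g (k + i)) (-Φ g (k + i))
    _ ≤ 1 := max_le (norm_Utilde_apply_le_one hint hV' g _) (hint g _)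
    _ ≤ (p : ℝ) ^ (-((0 : ℕ) - i + 1 : ℤ)) := one_le_zpow₀ hp (by omega)

end

theorem stmt17_general (p k : ℕ) [Fact p.Prime]
    (Φ₀ : Matrix (Fin 2) (Fin 2) ℚ_[p] → ℕ → ℚ_[p])
    -- Φ₀ ∈ A_k'(Γ, ℤ_p): integral moments, with the low moments in V_k'(ℤ_p):
    (hint : ∀ g i, ‖Φ₀ g i‖ ≤ 1)
    (hV' : ∀ g, ∀ i ≤ k / 2, ‖Φ₀ g i‖ ≤ (p : ℝ) ^ (-((k / 2 - i : ℕ) : ℤ)))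
    -- ρ(Φ₀) = φ is a Ũ_p-fixed point, i.e. the moments of index ≤ k are preserved:
    (heig : ∀ g, ∀ i ≤ k, Utilde p k Φ₀ g i = Φ₀ g i) :
    ∀ (n : ℕ) (g : Matrix (Fin 2) (Fin 2) ℚ_[p]),
      (∀ i ≤ k, (Utilde p k)^[n + 1] Φ₀ g i = (Utilde p k)^[n] Φ₀ g i) ∧
      (∀ i, 1 ≤ i → i ≤ n →
        ‖(Utilde p k)^[n + 1] Φ₀ g (k + i) - (Utilde p k)^[n] Φ₀ g (k + i)‖
          ≤ (p : ℝ) ^ (-((n : ℤ) - i + 1))) := by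
  intro n g
  have hdiff : MemFiltration p k n ((Utilde p k)^[n + 1] Φ₀ - (Utilde p k)^[n] Φ₀) := by
    rw [Function.iterate_succ_apply, ← iterate_Utilde_sub]
    exact (memFiltration_zero_Utilde_sub hint hV' heig).iterate_Utilde
  exact ⟨fun i hi => sub_eq_zero.mp (hdiff.1 g i hi), fun i hi _ => hdiff.2 g i hi⟩

/-- let `Φ₀ ∈ A_k'(Γ, ℤ_p)` be any lift of a `U_p`-eigenform `φ` of
eigenvalue `p^{k/2}` (so `ρ(Φ₀)` is fixed by `Ũ_p`), and set `Φ_n = Ũ_p^n Φ₀`.  Then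
`Φ_{n+1} - Φ_n` takes values in `F^n D_k(ℤ_p)`: its moments of index `≤ k` vanish, and
its `k+i`-th moments lie in `p^{n-i+1} ℤ_p` for `1 ≤ i ≤ n`. -/
theorem stmt17 (p k : ℕ) [Fact p.Prime] (hk : Even k)
    (Γ : Set (Matrix (Fin 2) (Fin 2) ℚ_[p])) (hΓ : ∀ γ ∈ Γ, γ.det = 1)
    (Φ₀ : Matrix (Fin 2) (Fin 2) ℚ_[p] → ℕ → ℚ_[p])
    -- left ℚ_p^× Γ-invariance:
    (hinv : ∀ (u : ℚ_[p]) (γ g : Matrix (Fin 2) (Fin 2) ℚ_[p]),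
      u ≠ 0 → γ ∈ Γ → Φ₀ (u • (γ * g)) = Φ₀ g)
    -- Φ₀ ∈ A_k'(Γ, ℤ_p): integral moments, with the low moments in V_k'(ℤ_p):
    (hint : ∀ g i, ‖Φ₀ g i‖ ≤ 1)
    (hV' : ∀ g, ∀ i ≤ k / 2, ‖Φ₀ g i‖ ≤ (p : ℝ) ^ (-((k / 2 - i : ℕ) : ℤ)))
    -- ρ(Φ₀) = φ is a Ũ_p-fixed point, i.e. the moments of index ≤ k are preserved:
    (heig : ∀ g, ∀ i ≤ k, Utilde p k Φ₀ g i = Φ₀ g i) :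
    ∀ (n : ℕ) (g : Matrix (Fin 2) (Fin 2) ℚ_[p]),
      (∀ i ≤ k, (Utilde p k)^[n + 1] Φ₀ g i = (Utilde p k)^[n] Φ₀ g i) ∧
      (∀ i, 1 ≤ i → i ≤ n →
        ‖(Utilde p k)^[n + 1] Φ₀ g (k + i) - (Utilde p k)^[n] Φ₀ g (k + i)‖
          ≤ (p : ℝ) ^ (-((n : ℤ) - i + 1))) :=
  stmt17_general p k Φ₀ hint hV' heig
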